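/- arXiv:2312.00983 — 2 statements merged into one kernel-verified Lean document; each statement's English description precedes it below -/
import Mathlib

section
/- Under the stated setup, assume that n_1, …, n_ℓ are pairwise coprime and that G has no pseudo-reflection. Then the following are equivalent: (1) tr_{R^G}(R^{det^{-1}}) ⊇ m_G (i.e., R^G is nearly Gorenstein, since R^{det^{-1}} is a graded canonical module of R^G up to degree shift); (2) the ideal R^{det} · R^{det^{-1}} of R^G contains m_G; (3) every monomial of positive degree lying in R^G is divisible in R by some monomial belonging to R^{det}. -/
open MvPolynomial

set_option synthInstance.maxHeartbeats 1000000
set_option maxHeartbeats 1000000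

noncomputable section

/-- The trace ideal of a module `M` over a commutative ring `A`:
the sum of images of all `A`-linear maps `M → A`. -/
def traceIdeal (A : Type*) [CommRing A] (M : Type*) [AddCommGroup M] [Module A M] :
    Ideal A :=
  ⨆ f : M →ₗ[A] A, LinearMap.range f

variable {K : Type} [Field K] {d : ℕ}

/-- The subgroup of `K`-algebra automorphisms of `K[X_1,…,X_d]` generated
by a family `σ`. -/
def Ggen {ℓ : ℕ} (σ : Fin ℓ → (MvPolynomial (Fin d) K ≃ₐ[K] MvPolynomial (Fin d) K)) :
    Subgroup (MvPolynomial (Fin d) K ≃ₐ[K] MvPolynomial (Fin d) K) :=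
  Subgroup.closure (Set.range σ)

/-- The ring of invariants `R^G`, as a subalgebra of `R = K[X_1,…,X_d]`. -/
def invariants (G : Subgroup (MvPolynomial (Fin d) K ≃ₐ[K] MvPolynomial (Fin d) K)) :
    Subalgebra K (MvPolynomial (Fin d) K) where
  carrier := {a | ∀ g ∈ G, g a = a}
  mul_mem' := fun ha hb g hg => by rw [map_mul, ha g hg, hb g hg]
  one_mem' := fun g hg => map_one _
  add_mem' := fun ha hb g hg => by rw [map_add, ha g hg, hb g hg]
  zero_mem' := fun g hg => map_zero _
  algebraMap_mem' := fun r g hg => AlgEquiv.commutes g r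

/-- The semi-invariants `R^𝒳` of weight a character `𝒳 : G → Kˣ`, as an
`R^G`-submodule of `R`. -/
def semiInvariants (G : Subgroup (MvPolynomial (Fin d) K ≃ₐ[K] MvPolynomial (Fin d) K))
    (χ : G →* Kˣ) : Submodule (invariants G) (MvPolynomial (Fin d) K) where
  carrier := {a | ∀ g : G, (g : MvPolynomial (Fin d) K ≃ₐ[K] MvPolynomial (Fin d) K) a
      = (χ g : K) • a}
  add_mem' := fun ha hb g => by rw [map_add, ha g, hb g, smul_add]
  zero_mem' := fun g => by rw [map_zero, smul_zero]
  smul_mem' := fun s a ha g => by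
    have h1 : (s • a : MvPolynomial (Fin d) K) = (s : MvPolynomial (Fin d) K) * a := rfl
    rw [h1, map_mul, s.2 g g.2, ha g, mul_smul_comm]

/-- An ideal of `R^G` is graded if, together with each element, it contains all of its
homogeneous components (taken in `R = K[X_1,…,X_d]` with the standard grading). -/
def IsGradedIdeal (G : Subgroup (MvPolynomial (Fin d) K ≃ₐ[K] MvPolynomial (Fin d) K))
    (p : Ideal (invariants G)) : Prop :=
  ∀ a : invariants G, a ∈ p → ∀ k : ℕ, ∀ b : invariants G,
    (b : MvPolynomial (Fin d) K) = homogeneousComponent k (a : MvPolynomial (Fin d) K) →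
      b ∈ p

/-- The graded maximal ideal `m_G` of `R^G`: the invariants with zero constant term. -/
def mG (G : Subgroup (MvPolynomial (Fin d) K ≃ₐ[K] MvPolynomial (Fin d) K)) :
    Ideal (invariants G) :=
  RingHom.ker ((constantCoeff : MvPolynomial (Fin d) K →+* K).comp
    (Subalgebra.val (invariants G)).toRingHom)

/-- A (diagonalizable) algebra automorphism of `K[X_1,…,X_d]` is a pseudo-reflection
if it scales each variable and its eigenspace for the eigenvalue `1` on `K^d`
has dimension `d - 1`, i.e. exactly `d - 1` of the scaling factors equal `1`. -/
def IsPseudoReflection (g : MvPolynomial (Fin d) K ≃ₐ[K] MvPolynomial (Fin d) K) : Prop :=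
  ∃ c : Fin d → K, (∀ j, g (X j) = c j • X j) ∧
    Nat.card {j : Fin d // c j = 1} = d - 1

lemma mem_Ggen {ℓ : ℕ} (σ : Fin ℓ → (MvPolynomial (Fin d) K ≃ₐ[K] MvPolynomial (Fin d) K))
    (i : Fin ℓ) : σ i ∈ Ggen σ :=
  Subgroup.subset_closure (Set.mem_range_self i)

/-- The semi-invariants of the character determined on the generators `σ_i` by the
values `c i ∈ K`, as an `R^G`-submodule of `R`. -/
def semiInvariantsOn {ℓ : ℕ}
    (σ : Fin ℓ → (MvPolynomial (Fin d) K ≃ₐ[K] MvPolynomial (Fin d) K))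
    (c : Fin ℓ → K) : Submodule (invariants (Ggen σ)) (MvPolynomial (Fin d) K) where
  carrier := {a | ∀ i, σ i a = c i • a}
  add_mem' := fun ha hb i => by rw [map_add, ha i, hb i, smul_add]
  zero_mem' := fun i => by rw [map_zero, smul_zero]
  smul_mem' := fun s a ha i => by
    have h1 : (s • a : MvPolynomial (Fin d) K) = (s : MvPolynomial (Fin d) K) * a := rfl
    rw [h1, map_mul, s.2 (σ i) (mem_Ggen σ i), ha i, mul_smul_comm]

/-- The ideal `N₁ · N₂` of `R^G` generated by all products of an element of `N₁`
with an element of `N₂`, for `R^G`-submodules `N₁, N₂` of `R`. -/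
def prodIdeal (G : Subgroup (MvPolynomial (Fin d) K ≃ₐ[K] MvPolynomial (Fin d) K))
    (N₁ N₂ : Submodule (invariants G) (MvPolynomial (Fin d) K)) : Ideal (invariants G) :=
  Ideal.span {a : invariants G | ∃ f ∈ N₁, ∃ h ∈ N₂, (a : MvPolynomial (Fin d) K) = f * h}

/-!
The generator `σ_i` multiplies the monomial `x^m` by `ξ_i ^ (∑_j t_ij m_j)`, so every
semi-invariant is a sum of semi-invariant monomials of the same weight and all three conditions
are statements about monomials. Products `R^{det} · R^{det⁻¹}` are invariant, hence lie in the
trace of `R^{det⁻¹}`; conversely both this product ideal and the trace lie in the monomial ideal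
generated by the monomials of `R^{det}`, which gives back condition (3). For the trace this rests on
the identity `x^{a'} φ(x^a) = x^a φ(x^{a'})` for `φ : R^{det⁻¹} → R^G` and monomials
`x^a, x^{a'}` of `R^{det⁻¹}` (multiply both by `x_1 ⋯ x_d ∈ R^{det}`). Since `G` has no
pseudo-reflection, for each `j` the exponents `t_ij'` with `j' ≠ j` have a gcd coprime to `n_i`,
and as the `n_i` are pairwise coprime, the Chinese remainder theorem yields such an `x^{a'}` not
involving `X_j`. Hence `x^a` divides `φ(x^a)`, with a quotient whose monomials lie in `R^{det}`.
-/

open Finset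

lemma Finset.natCast_gcd {ι : Type*} (s : Finset ι) (f : ι → ℕ) :
    ((s.gcd f : ℕ) : ℤ) = s.gcd fun i => (f i : ℤ) := by
  classical
  induction s using Finset.induction_on with
  | empty => simp
  | insert a s _ ih =>
    rw [gcd_insert, gcd_insert, ← ih, ← Int.coe_gcd, Int.gcd_natCast_natCast]
    rfl

lemma ZMod.exists_sum_mul_eq_of_coprime_gcd {κ : Type*} (s : Finset κ) (t : κ → ℕ) {n : ℕ}
    [NeZero n] (h : Nat.Coprime (s.gcd t) n) (r : ZMod n) :
    ∃ a : κ → ℕ, ∑ k ∈ s, (t k : ZMod n) * a k = r := by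
  obtain ⟨g, hg⟩ := s.gcd_eq_sum_mul fun k => (t k : ℤ)
  set u := ZMod.unitOfCoprime _ h
  refine ⟨fun k => (g k * (u⁻¹ * r : ZMod n)).val, ?_⟩
  have hgcd : ((s.gcd t : ℕ) : ZMod n) = ∑ k ∈ s, (t k : ZMod n) * g k := by
    exact_mod_cast congrArg (Int.cast : ℤ → ZMod n) ((s.natCast_gcd t).trans hg)
  calc ∑ k ∈ s, (t k : ZMod n) * (g k * (u⁻¹ * r : ZMod n)).val
      = ((s.gcd t : ℕ) : ZMod n) * (u⁻¹ * r : ZMod n) := by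
        simp only [ZMod.natCast_zmod_val, hgcd, Finset.sum_mul, mul_assoc]
    _ = r := by rw [← mul_assoc, ← ZMod.coe_unitOfCoprime _ h, Units.mul_inv, one_mul]

lemma exists_natCast_eq_ite_of_pairwise_coprime {ι : Type*} [Fintype ι] [DecidableEq ι]
    {n : ι → ℕ} (hn : ∀ i, n i ≠ 0) (hcop : Pairwise (Function.onFun Nat.Coprime n))
    (i : ι) :
    ∃ N : ℕ, ∀ i', (N : ZMod (n i')) = if i' = i then 1 else 0 := by
  obtain ⟨N, hN⟩ := Nat.chineseRemainderOfFinset (fun i' => if i' = i then 1 else 0) n univ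
    (fun i' _ => hn i') (fun _ _ _ _ h => hcop h)
  refine ⟨N, fun i' => ?_⟩
  have := (ZMod.natCast_eq_natCast_iff _ _ _).mpr (hN i' (mem_univ _))
  split_ifs at this ⊢ <;> simpa using this

lemma exists_sum_mul_eq_of_pairwise_coprime {ι κ : Type*} [Fintype ι] [Fintype κ]
    (s : Finset κ) (t : ι → κ → ℕ) {n : ι → ℕ} (hn : ∀ i, n i ≠ 0)
    (hcop : Pairwise (Function.onFun Nat.Coprime n))
    (hgcd : ∀ i, Nat.Coprime (s.gcd (t i)) (n i)) (e : ∀ i, ZMod (n i)) :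
    ∃ a : κ → ℕ, (∀ k ∉ s, a k = 0) ∧
      ∀ i, ∑ k, (t i k : ZMod (n i)) * a k = e i := by
  classical
  have (i : ι) : NeZero (n i) := ⟨hn i⟩
  choose b hb using fun i => ZMod.exists_sum_mul_eq_of_coprime_gcd s (t i) (hgcd i) (e i)
  choose N hN using exists_natCast_eq_ite_of_pairwise_coprime hn hcop
  refine ⟨fun k => if k ∈ s then ∑ i', N i' * b i' k else 0, fun k hk => if_neg hk,
    fun i => ?_⟩
  calc ∑ k, (t i k : ZMod (n i)) *
        ((if k ∈ s then ∑ i', N i' * b i' k else 0 : ℕ) : ZMod (n i))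
      = ∑ i', (N i' : ZMod (n i)) * ∑ k ∈ s, (t i k : ZMod (n i)) * b i' k := by
        simp only [apply_ite (Nat.cast : ℕ → ZMod (n i)), mul_ite, Nat.cast_zero, mul_zero,
          sum_ite_mem, univ_inter, Nat.cast_sum, Nat.cast_mul, mul_sum]
        rw [sum_comm]
        exact sum_congr rfl fun _ _ => sum_congr rfl fun _ _ => by ring
    _ = e i := by simp [hN, hb]

section Monomials

variable {R ι : Type*} [CommSemiring R]

lemma Finsupp.weight_equivFunOnFinite_symm [Fintype ι] (w a : ι → ℕ) :
    Finsupp.weight w (Finsupp.equivFunOnFinite.symm a) = ∑ k, a k * w k := by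
  simp [Finsupp.weight_apply, Finsupp.sum_fintype]

lemma MvPolynomial.mem_of_forall_monomial_mem {A : Type*} [CommSemiring A] [Algebra R A]
    [Module A (MvPolynomial ι R)] [IsScalarTower R A (MvPolynomial ι R)]
    (P : Submodule A (MvPolynomial ι R)) {x : MvPolynomial ι R}
    (h : ∀ m ∈ x.support, monomial m 1 ∈ P) : x ∈ P := by
  rw [x.as_sum]
  exact sum_mem fun m hm => by
    simpa [smul_monomial] using P.smul_of_tower_mem (coeff m x) (h m hm)

lemma MvPolynomial.le_of_monomial_mul_eq_monomial_mul {a a' m : ι →₀ ℕ}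
    {p q : MvPolynomial ι R}
    (h : monomial a' 1 * p = monomial a 1 * q) (hm : m ∈ p.support) {j : ι} (hj : a' j = 0) :
    a j ≤ m j := by
  have hmem : a' + m ∈ (monomial a 1 * q).support := by
    rw [← h, mem_support_iff, coeff_monomial_mul, one_mul]
    exact mem_support_iff.mp hm
  have hspan : monomial a 1 * q ∈ Ideal.span ((fun s => monomial s (1 : R)) '' {a}) :=
    Ideal.mul_mem_right _ _ (Ideal.subset_span ⟨a, rfl, rfl⟩)
  obtain ⟨_, rfl, hle⟩ := mem_ideal_span_monomial_image.mp hspan _ hmem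
  simpa [hj] using hle j

end Monomials

lemma Subalgebra.mul_linearMap_eq {R S : Type*} [CommRing R] [CommRing S] [IsDomain S]
    [Algebra R S] {A : Subalgebra R S} {N : Submodule A S} (f : N →ₗ[A] A) (u v : N) {w : S}
    (hw : w ≠ 0) (hu : w * u ∈ A) (hv : w * v ∈ A) : (v : S) * f u = u * f v := by
  have hsmul : (⟨w * v, hv⟩ : A) • u = (⟨w * u, hu⟩ : A) • v :=
    Subtype.ext (by simp only [Submodule.coe_smul_of_tower, Subalgebra.smul_def]; ring)
  have := congrArg (fun y : A => (y : S)) (congrArg f hsmul)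
  simp only [map_smul, smul_eq_mul] at this
  exact mul_left_cancel₀ hw (by rw [← mul_assoc, ← mul_assoc]; exact this)

lemma isPseudoReflection_of_eq_one_iff {g : MvPolynomial (Fin d) K ≃ₐ[K] MvPolynomial (Fin d) K}
    {c : Fin d → K} (hg : ∀ j, g (X j) = c j • X j) (j : Fin d)
    (hc : ∀ j', c j' = 1 ↔ j' ≠ j) :
    IsPseudoReflection g :=
  ⟨c, hg, by simp [Nat.card_congr (Equiv.subtypeEquivRight hc)]⟩

lemma prodIdeal_le_traceIdeal
    {G : Subgroup (MvPolynomial (Fin d) K ≃ₐ[K] MvPolynomial (Fin d) K)}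
    {N₁ N₂ : Submodule (invariants G) (MvPolynomial (Fin d) K)}
    (hmul : ∀ a ∈ N₁, ∀ b ∈ N₂, a * b ∈ invariants G) :
    prodIdeal G N₁ N₂ ≤ traceIdeal (invariants G) N₂ := by
  refine Ideal.span_le.mpr ?_
  rintro p ⟨a, ha, b, hb, hp⟩
  let φ : N₂ →ₗ[invariants G] invariants G :=
    { toFun := fun x => ⟨a * x, hmul a ha x x.2⟩
      map_add' := fun x y => Subtype.ext (mul_add a x y)
      map_smul' := fun r x => Subtype.ext (mul_left_comm a r x) }
  exact Submodule.mem_iSup_of_mem φ ⟨⟨b, hb⟩, Subtype.ext hp.symm⟩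

section Characters

variable {ℓ : ℕ} {ξ : Fin ℓ → K} {t : Fin ℓ → Fin d → ℕ}
  {σ : Fin ℓ → (MvPolynomial (Fin d) K ≃ₐ[K] MvPolynomial (Fin d) K)}

lemma mem_invariants_Ggen_iff {a : MvPolynomial (Fin d) K} :
    a ∈ invariants (Ggen σ) ↔ a ∈ semiInvariantsOn σ 1 := by
  refine ⟨fun h i => by simpa using h (σ i) (mem_Ggen σ i), fun h g hg => ?_⟩
  induction hg using Subgroup.closure_induction with
  | mem g hg => obtain ⟨i, rfl⟩ := hg; simpa using h i
  | one => rfl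
  | mul g g' _ _ hg hg' => rw [AlgEquiv.mul_apply, hg', hg]
  | inv g _ hg => exact (AlgEquiv.symm_apply_eq g).mpr hg.symm

lemma mul_mem_semiInvariantsOn {c c' : Fin ℓ → K} {a b : MvPolynomial (Fin d) K}
    (ha : a ∈ semiInvariantsOn σ c) (hb : b ∈ semiInvariantsOn σ c') :
    a * b ∈ semiInvariantsOn σ (c * c') := fun i => by
  rw [map_mul, ha i, hb i, smul_mul_smul_comm]
  rfl

lemma generator_apply_monomial (hσ : ∀ i j, σ i (X j) = ξ i ^ t i j • X j) (i : Fin ℓ)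
    (m : Fin d →₀ ℕ) (r : K) :
    σ i (monomial m r) = ξ i ^ Finsupp.weight (t i) m • monomial m r := by
  induction m using Finsupp.induction with
  | zero => simpa [← C_apply, ← algebraMap_eq] using (σ i).commutes r
  | single_add j k m _ _ ih =>
    rw [monomial_single_add, map_mul, ih, map_pow, hσ, smul_pow, smul_mul_smul_comm, ← pow_mul,
      ← pow_add, map_add, Finsupp.weight_single, smul_eq_mul, mul_comm k]

lemma coeff_generator_apply (hσ : ∀ i j, σ i (X j) = ξ i ^ t i j • X j) (i : Fin ℓ)
    (a : MvPolynomial (Fin d) K) (m : Fin d →₀ ℕ) :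
    coeff m (σ i a) = ξ i ^ Finsupp.weight (t i) m * coeff m a := by
  induction a using MvPolynomial.induction_on' with
  | monomial u r =>
    rw [generator_apply_monomial hσ, coeff_smul, coeff_monomial]
    split_ifs with h <;> simp [h]
  | add p q hp hq => rw [map_add, coeff_add, coeff_add, hp, hq, mul_add]

lemma mem_semiInvariantsOn_iff (hσ : ∀ i j, σ i (X j) = ξ i ^ t i j • X j)
    {c : Fin ℓ → K} {a : MvPolynomial (Fin d) K} :
    a ∈ semiInvariantsOn σ c ↔
      ∀ m ∈ a.support, ∀ i, ξ i ^ Finsupp.weight (t i) m = c i := by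
  change (∀ i, σ i a = c i • a) ↔ _
  simp only [MvPolynomial.ext_iff, coeff_generator_apply hσ, coeff_smul, smul_eq_mul,
    mem_support_iff]
  refine ⟨fun h m hm i => mul_right_cancel₀ hm (h i m), fun h i m => ?_⟩
  by_cases hm : coeff m a = 0
  · simp [hm]
  · rw [h m hm i]

lemma monomial_mem_semiInvariantsOn_iff (hσ : ∀ i j, σ i (X j) = ξ i ^ t i j • X j)
    {c : Fin ℓ → K} {m : Fin d →₀ ℕ} :
    monomial m (1 : K) ∈ semiInvariantsOn σ c ↔
      ∀ i, ξ i ^ Finsupp.weight (t i) m = c i := by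
  simp [mem_semiInvariantsOn_iff hσ]

lemma monomial_mem_semiInvariantsOn_of_mem_support
    (hσ : ∀ i j, σ i (X j) = ξ i ^ t i j • X j)
    {c : Fin ℓ → K} {a : MvPolynomial (Fin d) K} (ha : a ∈ semiInvariantsOn σ c)
    {m : Fin d →₀ ℕ} (hm : m ∈ a.support) : monomial m (1 : K) ∈ semiInvariantsOn σ c :=
  (monomial_mem_semiInvariantsOn_iff hσ).mpr ((mem_semiInvariantsOn_iff hσ).mp ha m hm)

lemma monomial_tsub_mem_semiInvariantsOn (hσ : ∀ i j, σ i (X j) = ξ i ^ t i j • X j)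
    (hξ : ∀ i, ξ i ≠ 0) {c c' : Fin ℓ → K} {a m : Fin d →₀ ℕ} (h : a ≤ m)
    (hm : monomial m (1 : K) ∈ semiInvariantsOn σ c)
    (ha : monomial a (1 : K) ∈ semiInvariantsOn σ c') :
    monomial (m - a) (1 : K) ∈ semiInvariantsOn σ (c / c') := by
  rw [monomial_mem_semiInvariantsOn_iff hσ] at hm ha ⊢
  intro i
  rw [Pi.div_apply, ← hm i, ← ha i, eq_div_iff (pow_ne_zero _ (hξ i)), ← pow_add,
    ← map_add, tsub_add_cancel_of_le h]

lemma generator_pow_apply_X (hσ : ∀ i j, σ i (X j) = ξ i ^ t i j • X j) (i : Fin ℓ)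
    (k : ℕ) (j : Fin d) :
    (σ i ^ k) (X j) = ξ i ^ (t i j * k) • X j := by
  induction k with
  | zero => simp
  | succ k ih =>
    rw [pow_succ, AlgEquiv.mul_apply, hσ, map_smul, ih, smul_smul, ← pow_add, mul_add_one,
      add_comm]

end Characters

section Det

variable {ℓ : ℕ} {ξ : Fin ℓ → K} {t : Fin ℓ → Fin d → ℕ}
  {σ : Fin ℓ → (MvPolynomial (Fin d) K ≃ₐ[K] MvPolynomial (Fin d) K)}

/-- The value of `det` on the generator `σ_i = diag(ξ_i ^ t_i1, …, ξ_i ^ t_id)`. -/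
def detChar (ξ : Fin ℓ → K) (t : Fin ℓ → Fin d → ℕ) : Fin ℓ → K :=
  fun i => ξ i ^ ∑ j, t i j

def detMonomialIdeal (σ : Fin ℓ → (MvPolynomial (Fin d) K ≃ₐ[K] MvPolynomial (Fin d) K))
    (ξ : Fin ℓ → K) (t : Fin ℓ → Fin d → ℕ) : Ideal (MvPolynomial (Fin d) K) :=
  Ideal.span ((fun m => monomial m 1) ''
    {m | monomial m (1 : K) ∈ semiInvariantsOn σ (detChar ξ t)})

lemma monomial_ones_mem_det (hσ : ∀ i j, σ i (X j) = ξ i ^ t i j • X j) :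
    monomial (Finsupp.equivFunOnFinite.symm 1) (1 : K) ∈ semiInvariantsOn σ (detChar ξ t) :=
  (monomial_mem_semiInvariantsOn_iff hσ).mpr fun i => by
    simp [Finsupp.weight_equivFunOnFinite_symm, detChar]

lemma mul_mem_invariants_of_mem_det (hξ : ∀ i, ξ i ≠ 0) {a b : MvPolynomial (Fin d) K}
    (ha : a ∈ semiInvariantsOn σ (detChar ξ t))
    (hb : b ∈ semiInvariantsOn σ (detChar ξ t)⁻¹) :
    a * b ∈ invariants (Ggen σ) := by
  have : detChar ξ t * (detChar ξ t)⁻¹ = 1 :=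
    funext fun i => mul_inv_cancel₀ (pow_ne_zero _ (hξ i))
  exact mem_invariants_Ggen_iff.mpr (this ▸ mul_mem_semiInvariantsOn ha hb)

lemma mem_detMonomialIdeal_of_mem_det (hσ : ∀ i j, σ i (X j) = ξ i ^ t i j • X j)
    {a : MvPolynomial (Fin d) K} (ha : a ∈ semiInvariantsOn σ (detChar ξ t)) :
    a ∈ detMonomialIdeal σ ξ t :=
  mem_ideal_span_monomial_image.mpr fun m hm =>
    ⟨m, monomial_mem_semiInvariantsOn_of_mem_support hσ ha hm, le_rfl⟩

lemma prodIdeal_le_comap_detMonomialIdeal (hσ : ∀ i j, σ i (X j) = ξ i ^ t i j • X j)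
    (N : Submodule (invariants (Ggen σ)) (MvPolynomial (Fin d) K)) :
    prodIdeal (Ggen σ) (semiInvariantsOn σ (detChar ξ t)) N ≤
      (detMonomialIdeal σ ξ t).comap (invariants (Ggen σ)).val := by
  refine Ideal.span_le.mpr ?_
  rintro p ⟨a, ha, b, -, hp⟩
  change (p : MvPolynomial (Fin d) K) ∈ detMonomialIdeal σ ξ t
  rw [hp]
  exact Ideal.mul_mem_right _ _ (mem_detMonomialIdeal_of_mem_det hσ ha)

lemma exists_monomial_dvd_of_mG_le
    (h : mG (Ggen σ) ≤ (detMonomialIdeal σ ξ t).comap (invariants (Ggen σ)).val)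
    (m : Fin d →₀ ℕ) (hm : m ≠ 0) (hmem : monomial m (1 : K) ∈ invariants (Ggen σ)) :
    ∃ m' : Fin d →₀ ℕ, monomial m' (1 : K) ∈ semiInvariantsOn σ (detChar ξ t) ∧
      (monomial m' (1 : K) : MvPolynomial (Fin d) K) ∣ monomial m 1 := by
  have hmG : (⟨monomial m 1, hmem⟩ : invariants (Ggen σ)) ∈ mG (Ggen σ) := by
    simp [mG, RingHom.mem_ker, constantCoeff_monomial, hm]
  obtain ⟨m', hm', hle⟩ := mem_ideal_span_monomial_image.mp (h hmG) m (by simp)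
  exact ⟨m', hm', monomial_dvd_monomial.mpr ⟨Or.inr hle, dvd_rfl⟩⟩

lemma mG_le_prodIdeal (hσ : ∀ i j, σ i (X j) = ξ i ^ t i j • X j) (hξ : ∀ i, ξ i ≠ 0)
    (h : ∀ m : Fin d →₀ ℕ, m ≠ 0 → monomial m (1 : K) ∈ invariants (Ggen σ) →
      ∃ m' : Fin d →₀ ℕ, monomial m' (1 : K) ∈ semiInvariantsOn σ (detChar ξ t) ∧
        (monomial m' (1 : K) : MvPolynomial (Fin d) K) ∣ monomial m 1) :
    mG (Ggen σ) ≤ prodIdeal (Ggen σ) (semiInvariantsOn σ (detChar ξ t))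
      (semiInvariantsOn σ (detChar ξ t)⁻¹) := by
  intro p hp
  obtain ⟨q, hq, hqp⟩ : (p : MvPolynomial (Fin d) K) ∈
      Submodule.map (Algebra.linearMap (invariants (Ggen σ)) _) (prodIdeal (Ggen σ) _ _) := by
    refine mem_of_forall_monomial_mem _ fun m hm => ?_
    have hmem : monomial m (1 : K) ∈ invariants (Ggen σ) := mem_invariants_Ggen_iff.mpr
      (monomial_mem_semiInvariantsOn_of_mem_support hσ (mem_invariants_Ggen_iff.mp p.2) hm)
    have hm0 : m ≠ 0 := by
      rintro rfl
      exact mem_support_iff.mp hm hp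
    obtain ⟨m', hm', hdvd⟩ := h m hm0 hmem
    have hle : m' ≤ m := (monomial_dvd_monomial.mp hdvd).1.resolve_left one_ne_zero
    have hquot : monomial (m - m') (1 : K) ∈ semiInvariantsOn σ (detChar ξ t)⁻¹ := by
      simpa using monomial_tsub_mem_semiInvariantsOn hσ hξ hle
        (mem_invariants_Ggen_iff.mp hmem) hm'
    refine ⟨⟨monomial m 1, hmem⟩, Ideal.subset_span ⟨_, hm', _, hquot, ?_⟩, rfl⟩
    rw [monomial_mul, add_tsub_cancel_of_le hle, one_mul]
  rwa [← Subtype.ext hqp]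

lemma le_of_mem_support_apply_monomial (hσ : ∀ i j, σ i (X j) = ξ i ^ t i j • X j)
    (hξ : ∀ i, ξ i ≠ 0)
    (hdetInv : ∀ j, ∃ a' : Fin d →₀ ℕ, a' j = 0 ∧
      monomial a' (1 : K) ∈ semiInvariantsOn σ (detChar ξ t)⁻¹)
    (f : semiInvariantsOn σ (detChar ξ t)⁻¹ →ₗ[invariants (Ggen σ)] invariants (Ggen σ))
    {a m : Fin d →₀ ℕ} (ha : monomial a (1 : K) ∈ semiInvariantsOn σ (detChar ξ t)⁻¹)
    (hm : m ∈ (f ⟨_, ha⟩ : MvPolynomial (Fin d) K).support) : a ≤ m := by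
  intro j
  obtain ⟨a', ha'j, ha'⟩ := hdetInv j
  have hones := monomial_ones_mem_det hσ
  have hmul := Subalgebra.mul_linearMap_eq f ⟨_, ha⟩ ⟨_, ha'⟩
    (monomial_eq_zero.not.mpr one_ne_zero)
    (mul_mem_invariants_of_mem_det hξ hones ha) (mul_mem_invariants_of_mem_det hξ hones ha')
  exact le_of_monomial_mul_eq_monomial_mul hmul hm ha'j

lemma traceIdeal_le_comap_detMonomialIdeal (hσ : ∀ i j, σ i (X j) = ξ i ^ t i j • X j)
    (hξ : ∀ i, ξ i ≠ 0)
    (hdetInv : ∀ j, ∃ a' : Fin d →₀ ℕ, a' j = 0 ∧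
      monomial a' (1 : K) ∈ semiInvariantsOn σ (detChar ξ t)⁻¹) :
    traceIdeal (invariants (Ggen σ)) (semiInvariantsOn σ (detChar ξ t)⁻¹) ≤
      (detMonomialIdeal σ ξ t).comap (invariants (Ggen σ)).val := by
  refine iSup_le fun f => ?_
  rintro _ ⟨x, rfl⟩
  obtain ⟨y, hy, hyx⟩ : (x : MvPolynomial (Fin d) K) ∈
      Submodule.map (semiInvariantsOn σ (detChar ξ t)⁻¹).subtype
        (Submodule.comap f ((detMonomialIdeal σ ξ t).comap (invariants (Ggen σ)).val)) := by
    refine mem_of_forall_monomial_mem _ fun a ha => ?_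
    have ha' := monomial_mem_semiInvariantsOn_of_mem_support hσ x.2 ha
    refine ⟨⟨_, ha'⟩, mem_ideal_span_monomial_image.mpr fun m hm => ?_, rfl⟩
    have hle := le_of_mem_support_apply_monomial hσ hξ hdetInv f ha' hm
    have hinv := monomial_mem_semiInvariantsOn_of_mem_support hσ
      (mem_invariants_Ggen_iff.mp (f ⟨_, ha'⟩).2) hm
    exact ⟨m - a, by simpa using monomial_tsub_mem_semiInvariantsOn hσ hξ hle hinv ha',
      tsub_le_self⟩
  rwa [← Subtype.ext hyx]

end Det

section NoPseudoReflection

variable {ℓ : ℕ} {n : Fin ℓ → ℕ} {ξ : Fin ℓ → K} {t : Fin ℓ → Fin d → ℕ}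
  {σ : Fin ℓ → (MvPolynomial (Fin d) K ≃ₐ[K] MvPolynomial (Fin d) K)}

lemma coprime_gcd_erase_of_not_isPseudoReflection (hn : ∀ i, 0 < n i)
    (hξ : ∀ i, IsPrimitiveRoot (ξ i) (n i))
    (hgcd : ∀ i, Nat.gcd (Finset.univ.gcd (t i)) (n i) = 1)
    (hσ : ∀ i j, σ i (X j) = ξ i ^ t i j • X j)
    (hpr : ∀ g ∈ Ggen σ, ¬ IsPseudoReflection g)
    (i : Fin ℓ) (j : Fin d) : Nat.Coprime ((univ.erase j).gcd (t i)) (n i) := by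
  set D := Nat.gcd ((univ.erase j).gcd (t i)) (n i)
  obtain ⟨k, hk⟩ : D ∣ n i := Nat.gcd_dvd_right _ _
  have hk0 : 0 < k := Nat.pos_of_ne_zero fun h => (hn i).ne' (by simp [hk, h])
  have hD : ∀ j' ≠ j, D ∣ t i j' := fun j' h =>
    (Nat.gcd_dvd_left _ _).trans (Finset.gcd_dvd (mem_erase.mpr ⟨h, mem_univ _⟩))
  -- `σ_i ^ k` fixes `X_j'` iff `D ∣ t_ij'`, so if `D ∤ t_ij` it is a pseudo-reflection.
  have hfix : ∀ j', ξ i ^ (t i j' * k) = 1 ↔ D ∣ t i j' := fun j' => by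
    rw [(hξ i).pow_eq_one_iff_dvd, hk, Nat.mul_dvd_mul_iff_right hk0]
  have hDj : D ∣ t i j := by
    by_contra h
    refine hpr _ (pow_mem (mem_Ggen σ i) k)
      (isPseudoReflection_of_eq_one_iff (generator_pow_apply_X hσ i k) j fun j' => ?_)
    rw [hfix]
    exact ⟨by rintro h' rfl; exact h h', hD j'⟩
  have : D ∣ Nat.gcd (univ.gcd (t i)) (n i) := Nat.dvd_gcd
    (Finset.dvd_gcd fun j' _ => if h : j' = j then h ▸ hDj else hD j' h) (Nat.gcd_dvd_right _ _)
  rw [hgcd i] at this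
  exact Nat.dvd_one.mp this

lemma exists_monomial_mem_detInv (hn : ∀ i, 0 < n i) (hξ : ∀ i, IsPrimitiveRoot (ξ i) (n i))
    (hgcd : ∀ i, Nat.gcd (Finset.univ.gcd (t i)) (n i) = 1)
    (hσ : ∀ i j, σ i (X j) = ξ i ^ t i j • X j)
    (hcop : ∀ i i', i ≠ i' → Nat.Coprime (n i) (n i'))
    (hpr : ∀ g ∈ Ggen σ, ¬ IsPseudoReflection g) (j : Fin d) :
    ∃ a : Fin d →₀ ℕ, a j = 0 ∧
      monomial a (1 : K) ∈ semiInvariantsOn σ (detChar ξ t)⁻¹ := by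
  obtain ⟨a, ha0, ha⟩ := exists_sum_mul_eq_of_pairwise_coprime (univ.erase j) t
    (fun i => (hn i).ne') (fun i i' h => hcop i i' h)
    (coprime_gcd_erase_of_not_isPseudoReflection hn hξ hgcd hσ hpr · j)
    (fun i => -∑ j', (t i j' : ZMod (n i)))
  refine ⟨Finsupp.equivFunOnFinite.symm a, ha0 j (by simp),
    (monomial_mem_semiInvariantsOn_iff hσ).mpr fun i => eq_inv_of_mul_eq_one_left ?_⟩
  rw [detChar, ← pow_add, (hξ i).pow_eq_one_iff_dvd, ← ZMod.natCast_eq_zero_iff,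
    Finsupp.weight_equivFunOnFinite_symm]
  push_cast
  simp only [mul_comm (a _ : ZMod (n i)), ha i, neg_add_cancel]

end NoPseudoReflection

theorem statement14_general {ℓ : ℕ}
    (n : Fin ℓ → ℕ) (hn : ∀ i, 0 < n i)
    (ξ : Fin ℓ → K) (hξ : ∀ i, IsPrimitiveRoot (ξ i) (n i))
    (t : Fin ℓ → Fin d → ℕ)
    (hgcd : ∀ i, Nat.gcd (Finset.univ.gcd (t i)) (n i) = 1)
    (σ : Fin ℓ → (MvPolynomial (Fin d) K ≃ₐ[K] MvPolynomial (Fin d) K))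
    (hσ : ∀ i j, σ i (X j) = ξ i ^ t i j • X j)
    (hcop : ∀ i i', i ≠ i' → Nat.Coprime (n i) (n i'))
    (hpr : ∀ g ∈ Ggen σ, ¬ IsPseudoReflection g) :
    ((mG (Ggen σ) ≤ traceIdeal (invariants (Ggen σ))
        (semiInvariantsOn σ fun i => (ξ i ^ (∑ j, t i j))⁻¹)) ↔
      (mG (Ggen σ) ≤ prodIdeal (Ggen σ)
        (semiInvariantsOn σ fun i => ξ i ^ (∑ j, t i j))
        (semiInvariantsOn σ fun i => (ξ i ^ (∑ j, t i j))⁻¹))) ∧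
    ((mG (Ggen σ) ≤ prodIdeal (Ggen σ)
        (semiInvariantsOn σ fun i => ξ i ^ (∑ j, t i j))
        (semiInvariantsOn σ fun i => (ξ i ^ (∑ j, t i j))⁻¹)) ↔
      (∀ m : Fin d →₀ ℕ, m ≠ 0 →
        (monomial m (1 : K)) ∈ invariants (Ggen σ) →
        ∃ m' : Fin d →₀ ℕ,
          (monomial m' (1 : K)) ∈ semiInvariantsOn σ (fun i => ξ i ^ (∑ j, t i j)) ∧
          (monomial m' (1 : K) : MvPolynomial (Fin d) K) ∣ monomial m 1)) := by
  have hξ0 : ∀ i, ξ i ≠ 0 := fun i => (hξ i).ne_zero (hn i).ne'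
  have htrace_le := traceIdeal_le_comap_detMonomialIdeal hσ hξ0
    (exists_monomial_mem_detInv hn hξ hgcd hσ hcop hpr)
  have hprod_le := prodIdeal_le_comap_detMonomialIdeal hσ (semiInvariantsOn σ (detChar ξ t)⁻¹)
  have hprod_le_trace := prodIdeal_le_traceIdeal (N₂ := semiInvariantsOn σ (detChar ξ t)⁻¹)
    fun _ ha _ hb => mul_mem_invariants_of_mem_det hξ0 ha hb
  exact ⟨⟨fun h => mG_le_prodIdeal hσ hξ0 (exists_monomial_dvd_of_mG_le (h.trans htrace_le)),
      fun h => h.trans hprod_le_trace⟩,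
    ⟨fun h => exists_monomial_dvd_of_mG_le (h.trans hprod_le), mG_le_prodIdeal hσ hξ0⟩⟩

/-- Corollary 4.3: with `n_1, …, n_ℓ` pairwise coprime and `G` without
pseudo-reflections, the following are equivalent:
(1) `R^G` is nearly Gorenstein, i.e. `tr_{R^G}(R^{det⁻¹}) ⊇ m_G`;
(2) `R^{det} · R^{det⁻¹} ⊇ m_G`;
(3) every monomial of positive degree lying in `R^G` is divisible in `R` by some
monomial belonging to `R^{det}`. -/
theorem statement14 [IsAlgClosed K] {ℓ : ℕ} (hd : 2 ≤ d) (hℓ : 1 ≤ ℓ)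
    (n : Fin ℓ → ℕ) (hn : ∀ i, 0 < n i) (hchar : ∀ i, (n i : K) ≠ 0)
    (ξ : Fin ℓ → K) (hξ : ∀ i, IsPrimitiveRoot (ξ i) (n i))
    (t : Fin ℓ → Fin d → ℕ)
    (hgcd : ∀ i, Nat.gcd (Finset.univ.gcd (t i)) (n i) = 1)
    (σ : Fin ℓ → (MvPolynomial (Fin d) K ≃ₐ[K] MvPolynomial (Fin d) K))
    (hσ : ∀ i j, σ i (X j) = ξ i ^ t i j • X j)
    (hcop : ∀ i i', i ≠ i' → Nat.Coprime (n i) (n i'))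
    (hpr : ∀ g ∈ Ggen σ, ¬ IsPseudoReflection g) :
    ((mG (Ggen σ) ≤ traceIdeal (invariants (Ggen σ))
        (semiInvariantsOn σ fun i => (ξ i ^ (∑ j, t i j))⁻¹)) ↔
      (mG (Ggen σ) ≤ prodIdeal (Ggen σ)
        (semiInvariantsOn σ fun i => ξ i ^ (∑ j, t i j))
        (semiInvariantsOn σ fun i => (ξ i ^ (∑ j, t i j))⁻¹))) ∧
    ((mG (Ggen σ) ≤ prodIdeal (Ggen σ)
        (semiInvariantsOn σ fun i => ξ i ^ (∑ j, t i j))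
        (semiInvariantsOn σ fun i => (ξ i ^ (∑ j, t i j))⁻¹)) ↔
      (∀ m : Fin d →₀ ℕ, m ≠ 0 →
        (monomial m (1 : K)) ∈ invariants (Ggen σ) →
        ∃ m' : Fin d →₀ ℕ,
          (monomial m' (1 : K)) ∈ semiInvariantsOn σ (fun i => ξ i ^ (∑ j, t i j)) ∧
          (monomial m' (1 : K) : MvPolynomial (Fin d) K) ∣ monomial m 1)) :=
  statement14_general n hn ξ hξ t hgcd σ hσ hcop hpr
end
end

section
/- Let A be a commutative Noetherian ℕ-graded ring possessing a unique maximal element among its proper graded ideals, and let M be a finitely generated graded A-module. Then: (a) tr_A(M) = A if and only if M has a nonzero free A-module as a direct summand; and (b) for every graded prime ideal p of A, p does not contain tr_A(M) if and only if the localization M_p has a nonzero free A_p-module as a direct summand. -/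
set_option synthInstance.maxHeartbeats 1000000
set_option maxHeartbeats 1000000

noncomputable section

/-!
A surjection `M → A` splits off a copy of `A`, and a nonzero free summand yields such a
surjection, so both parts are about the existence of a surjective functional.

Over the local ring `A_p` a functional is surjective iff it takes a unit value, and for finitely
presented `M` every functional on `M_p` is, up to a unit, the localization of a functional on `M`;
this gives (b) for every prime `p`.

For (a), the homogeneous components of a functional `f`, of every integer degree, are again
functionals; their images are homogeneous ideals whose sum contains the image of `f`. If no
functional is surjective, all these images lie in the largest proper homogeneous ideal `m`, hence
so does the trace ideal.
-/

section FreeSummand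

variable {R X : Type*} [CommRing R] [AddCommGroup X] [Module R X]

theorem LinearMap.surjective_iff_exists_isUnit_apply (f : X →ₗ[R] R) :
    Function.Surjective f ↔ ∃ x, IsUnit (f x) := by
  refine ⟨fun hf => (hf 1).imp fun x (hx : f x = 1) => hx ▸ isUnit_one, ?_⟩
  rintro ⟨x, u, hu⟩ r
  exact ⟨(r * ↑u⁻¹) • x, by rw [map_smul, ← hu, smul_eq_mul, mul_assoc, Units.inv_mul, mul_one]⟩

theorem exists_isCompl_free_iff_exists_surjective [Nontrivial R] :
    (∃ N P : Submodule R X, IsCompl N P ∧ N ≠ ⊥ ∧ Module.Free R N) ↔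
      ∃ f : X →ₗ[R] R, Function.Surjective f := by
  constructor
  · rintro ⟨N, P, hNP, hN, hfree⟩
    have : Nontrivial N := Submodule.nontrivial_iff_ne_bot.mpr hN
    let b := Module.Free.chooseBasis R N
    obtain ⟨i⟩ := b.index_nonempty
    refine ⟨b.coord i ∘ₗ N.projectionOnto P hNP,
      (LinearMap.surjective_iff_exists_isUnit_apply _).mpr ⟨b i, ?_⟩⟩
    simp [Submodule.projectionOnto_apply_left, b.coord_apply]
  · rintro ⟨f, hf⟩
    obtain ⟨x, hx⟩ := hf 1
    let s := LinearMap.toSpanSingleton R X x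
    have hfs : f ∘ₗ s = LinearMap.id := by ext; simp [s, hx]
    have hs : Function.Injective s :=
      Function.LeftInverse.injective (g := f) (LinearMap.congr_fun hfs)
    have hidem : IsIdempotentElem (s ∘ₗ f) :=
      LinearMap.ext fun y => congrArg s (LinearMap.congr_fun hfs (f y))
    refine ⟨LinearMap.range s, LinearMap.ker f, ?_, ?_, .of_equiv (LinearEquiv.ofInjective s hs)⟩
    · rw [← LinearMap.range_comp_of_range_eq_top s (LinearMap.range_eq_top.mpr hf),
        ← LinearMap.ker_comp_of_ker_eq_bot f (LinearMap.ker_eq_bot.mpr hs)]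
      exact LinearMap.IsIdempotentElem.isCompl hidem
    · rw [Ne, LinearMap.range_eq_bot]
      intro h0
      simpa [h0] using LinearMap.congr_fun hfs 1

end FreeSummand

section Trace

variable {A M : Type*} [CommRing A] [AddCommGroup M] [Module A M]

theorem range_le_traceIdeal (f : M →ₗ[A] A) : LinearMap.range f ≤ traceIdeal A M :=
  le_iSup (fun f : M →ₗ[A] A => LinearMap.range f) f

theorem traceIdeal_le_iff {I : Ideal A} :
    traceIdeal A M ≤ I ↔ ∀ f : M →ₗ[A] A, LinearMap.range f ≤ I :=
  iSup_le_iff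

theorem traceIdeal_eq_top_of_surjective {f : M →ₗ[A] A} (hf : Function.Surjective f) :
    traceIdeal A M = ⊤ :=
  top_le_iff.mp <| LinearMap.range_eq_top.mpr hf ▸ range_le_traceIdeal f

theorem not_traceIdeal_le_iff {I : Ideal A} :
    ¬ traceIdeal A M ≤ I ↔ ∃ (f : M →ₗ[A] A) (x : M), f x ∉ I := by
  simp [traceIdeal_le_iff, SetLike.not_le_iff_exists]

end Trace

section Localization

variable {A M : Type*} [CommRing A] [AddCommGroup M] [Module A M] (p : Ideal A) [p.IsPrime]

abbrev localizeDual : Module.Dual A M →ₗ[A]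
    Module.Dual (Localization p.primeCompl) (LocalizedModule p.primeCompl M) :=
  IsLocalizedModule.mapExtendScalars p.primeCompl (LocalizedModule.mkLinearMap p.primeCompl M)
    (Algebra.linearMap A (Localization p.primeCompl)) (Localization p.primeCompl)

theorem isUnit_primeCompl_smul (s : p.primeCompl) {u : Localization p.primeCompl}
    (hu : IsUnit u) : IsUnit (s • u) := by
  rw [Submonoid.smul_def, Algebra.smul_def]
  exact (IsLocalization.map_units _ s).mul hu

theorem localizeDual_apply_mk (f : M →ₗ[A] A) (x : M) :
    localizeDual p f (LocalizedModule.mkLinearMap p.primeCompl M x) =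
      algebraMap A (Localization p.primeCompl) (f x) :=
  IsLocalizedModule.map_apply _ _ _ f x

theorem surjective_localizeDual_iff (f : M →ₗ[A] A) :
    Function.Surjective (localizeDual p f) ↔ ∃ x, f x ∉ p := by
  simp only [LinearMap.surjective_iff_exists_isUnit_apply, ← Ideal.mem_primeCompl_iff,
    ← IsLocalization.AtPrime.isUnit_to_map_iff (Localization p.primeCompl) p,
    ← localizeDual_apply_mk]
  refine ⟨fun ⟨z, hz⟩ => ?_, fun ⟨x, hx⟩ => ⟨_, hx⟩⟩
  obtain ⟨⟨x, s⟩, hxs⟩ :=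
    IsLocalizedModule.surj p.primeCompl (LocalizedModule.mkLinearMap _ M) z
  refine ⟨x, ?_⟩
  rw [← hxs, LinearMap.map_smul_of_tower]
  exact isUnit_primeCompl_smul p s hz

theorem exists_surjective_localizedModule_iff_not_traceIdeal_le [Module.FinitePresentation A M] :
    (∃ h : LocalizedModule p.primeCompl M →ₗ[Localization p.primeCompl]
      Localization p.primeCompl, Function.Surjective h) ↔ ¬ traceIdeal A M ≤ p := by
  rw [not_traceIdeal_le_iff]
  constructor
  · rintro ⟨h, hh⟩
    obtain ⟨⟨f, s⟩, hfs⟩ := IsLocalizedModule.surj p.primeCompl (localizeDual p (M := M)) h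
    refine ⟨f, (surjective_localizeDual_iff p f).mp ?_⟩
    obtain ⟨z, hz⟩ := (LinearMap.surjective_iff_exists_isUnit_apply h).mp hh
    refine (LinearMap.surjective_iff_exists_isUnit_apply _).mpr ⟨z, ?_⟩
    rw [← hfs, LinearMap.smul_apply]
    exact isUnit_primeCompl_smul p s hz
  · rintro ⟨f, x, hx⟩
    exact ⟨_, (surjective_localizeDual_iff p f).mpr ⟨x, hx⟩⟩

end Localization

section Graded

open DirectSum SetLike

variable {A : Type*} [CommRing A] (𝒜 : ℕ → AddSubgroup A) [GradedRing 𝒜]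

def gradedProjInt (k : ℤ) : A →+ A :=
  if 0 ≤ k then GradedRing.proj 𝒜 k.toNat else 0

theorem gradedProjInt_of_nonneg {k : ℤ} (hk : 0 ≤ k) (a : A) :
    gradedProjInt 𝒜 k a = decompose 𝒜 a k.toNat := by
  simp [gradedProjInt, hk]

theorem gradedProjInt_of_neg {k : ℤ} (hk : k < 0) (a : A) : gradedProjInt 𝒜 k a = 0 := by
  simp [gradedProjInt, hk.not_ge]

theorem isHomogeneousElem_gradedProjInt (k : ℤ) (a : A) :
    IsHomogeneousElem 𝒜 (gradedProjInt 𝒜 k a) := by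
  rcases lt_or_ge k 0 with hk | hk
  · exact gradedProjInt_of_neg 𝒜 hk a ▸ ⟨0, zero_mem _⟩
  · exact gradedProjInt_of_nonneg 𝒜 hk a ▸ ⟨_, SetLike.coe_mem _⟩

theorem gradedProjInt_mul_of_mem {j : ℕ} {a : A} (ha : a ∈ 𝒜 j) (k : ℤ) (b : A) :
    gradedProjInt 𝒜 (j + k) (a * b) = a * gradedProjInt 𝒜 k b := by
  rcases lt_or_ge k 0 with hk | hk
  · rw [gradedProjInt_of_neg 𝒜 hk, mul_zero]
    rcases lt_or_ge ((j : ℤ) + k) 0 with hjk | hjk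
    · exact gradedProjInt_of_neg 𝒜 hjk _
    · rw [gradedProjInt_of_nonneg 𝒜 hjk]
      exact coe_decompose_mul_of_left_mem_of_not_le 𝒜 ha (by omega)
  · rw [gradedProjInt_of_nonneg 𝒜 (by omega), gradedProjInt_of_nonneg 𝒜 hk,
      show ((j : ℤ) + k).toNat = j + k.toNat by omega,
      coe_decompose_mul_of_left_mem_of_le 𝒜 ha (Nat.le_add_right _ _), Nat.add_sub_cancel_left]

variable {M : Type*} [AddCommGroup M] [Module A M] (ℳ : ℕ → AddSubgroup M) [Decomposition ℳ]

theorem span_setOf_isHomogeneousElem_eq_top :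
    Submodule.span A {x : M | IsHomogeneousElem ℳ x} = ⊤ := by
  refine Submodule.eq_top_iff'.mpr fun x => ?_
  induction x using Decomposition.inductionOn ℳ with
  | zero => exact zero_mem _
  | homogeneous y => exact Submodule.subset_span ⟨_, y.2⟩
  | add x y hx hy => exact add_mem hx hy

theorem LinearMap.range_eq_span_image_isHomogeneousElem {N : Type*} [AddCommGroup N] [Module A N]
    (g : M →ₗ[A] N) :
    LinearMap.range g = Submodule.span A (g '' {x | IsHomogeneousElem ℳ x}) := by
  rw [LinearMap.range_eq_map, ← span_setOf_isHomogeneousElem_eq_top ℳ, Submodule.map_span]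

def homogeneousComponentAddHom (f : M →ₗ[A] A) (n : ℤ) : M →+ A :=
  (toAddMonoid fun d : ℕ =>
      (gradedProjInt 𝒜 (d + n)).comp (f.toAddMonoidHom.comp (ℳ d).subtype)).comp
    (decomposeAddEquiv ℳ).toAddMonoidHom

theorem homogeneousComponentAddHom_of_mem (f : M →ₗ[A] A) (n : ℤ) {d : ℕ} {y : M}
    (hy : y ∈ ℳ d) : homogeneousComponentAddHom 𝒜 ℳ f n y = gradedProjInt 𝒜 (d + n) (f y) := by
  simp [homogeneousComponentAddHom, decompose_of_mem ℳ hy]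

variable [GradedSMul 𝒜 ℳ]

theorem homogeneousComponentAddHom_smul (f : M →ₗ[A] A) (n : ℤ) (a : A) (x : M) :
    homogeneousComponentAddHom 𝒜 ℳ f n (a • x) = a * homogeneousComponentAddHom 𝒜 ℳ f n x := by
  induction a using Decomposition.inductionOn 𝒜 with
  | zero => simp
  | add a b ha hb => rw [add_smul, map_add, ha, hb, add_mul]
  | homogeneous a =>
    induction x using Decomposition.inductionOn ℳ with
    | zero => simp
    | add x y hx hy => rw [smul_add, map_add, hx, hy, map_add, mul_add]
    | homogeneous y =>
      rw [homogeneousComponentAddHom_of_mem 𝒜 ℳ f n (GradedSMul.smul_mem a.2 y.2),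
        homogeneousComponentAddHom_of_mem 𝒜 ℳ f n y.2, map_smul, smul_eq_mul, vadd_eq_add,
        Nat.cast_add, add_assoc, gradedProjInt_mul_of_mem 𝒜 a.2]

def homogeneousComponent (f : M →ₗ[A] A) (n : ℤ) : M →ₗ[A] A where
  __ := homogeneousComponentAddHom 𝒜 ℳ f n
  map_smul' := homogeneousComponentAddHom_smul 𝒜 ℳ f n

theorem homogeneousComponent_apply_of_mem (f : M →ₗ[A] A) (n : ℤ) {d : ℕ} {y : M}
    (hy : y ∈ ℳ d) : homogeneousComponent 𝒜 ℳ f n y = gradedProjInt 𝒜 (d + n) (f y) :=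
  homogeneousComponentAddHom_of_mem 𝒜 ℳ f n hy

theorem isHomogeneous_range_homogeneousComponent (f : M →ₗ[A] A) (n : ℤ) :
    (LinearMap.range (homogeneousComponent 𝒜 ℳ f n)).IsHomogeneous 𝒜 := by
  rw [LinearMap.range_eq_span_image_isHomogeneousElem ℳ]
  refine Ideal.homogeneous_span 𝒜 _ ?_
  rintro _ ⟨y, ⟨d, hy⟩, rfl⟩
  rw [homogeneousComponent_apply_of_mem 𝒜 ℳ f n hy]
  exact isHomogeneousElem_gradedProjInt 𝒜 _ _

theorem traceIdeal_le_of_range_homogeneousComponent_le {I : Ideal A}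
    (hI : ∀ (f : M →ₗ[A] A) (n : ℤ), LinearMap.range (homogeneousComponent 𝒜 ℳ f n) ≤ I) :
    traceIdeal A M ≤ I := by
  classical
  refine traceIdeal_le_iff.mpr fun f => ?_
  rw [LinearMap.range_eq_span_image_isHomogeneousElem ℳ, Submodule.span_le]
  rintro _ ⟨y, ⟨d, hy⟩, rfl⟩
  rw [SetLike.mem_coe, ← sum_support_decompose 𝒜 (f y)]
  refine sum_mem fun e _ => hI f (e - d) ⟨y, ?_⟩
  rw [homogeneousComponent_apply_of_mem 𝒜 ℳ f _ hy, add_sub_cancel,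
    gradedProjInt_of_nonneg 𝒜 (Int.natCast_nonneg e), Int.toNat_natCast]

end Graded

theorem exists_surjective_of_traceIdeal_eq_top {A : Type*} [CommRing A]
    (𝒜 : ℕ → AddSubgroup A) [GradedRing 𝒜] {M : Type*} [AddCommGroup M] [Module A M]
    (ℳ : ℕ → AddSubgroup M) [DirectSum.Decomposition ℳ] [SetLike.GradedSMul 𝒜 ℳ]
    {m : Ideal A} (hm_ne : m ≠ ⊤)
    (hm_max : ∀ I : Ideal A, I.IsHomogeneous 𝒜 → I ≠ ⊤ → I ≤ m) (htop : traceIdeal A M = ⊤) :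
    ∃ f : M →ₗ[A] A, Function.Surjective f := by
  by_contra! hnone
  refine hm_ne (top_le_iff.mp (htop ▸ traceIdeal_le_of_range_homogeneousComponent_le 𝒜 ℳ ?_))
  exact fun f n => hm_max _ (isHomogeneous_range_homogeneousComponent 𝒜 ℳ f n)
    fun h => hnone _ (LinearMap.range_eq_top.mp h)

theorem statement15_general {A : Type*} [CommRing A] [IsNoetherianRing A]
    (𝒜 : ℕ → AddSubgroup A) [GradedRing 𝒜]
    (m : Ideal A) (hm_ne : m ≠ ⊤)
    (hm_max : ∀ I : Ideal A, Ideal.IsHomogeneous 𝒜 I → I ≠ ⊤ → I ≤ m)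
    {M : Type*} [AddCommGroup M] [Module A M] [Module.Finite A M]
    (ℳ : ℕ → AddSubgroup M) [SetLike.GradedSMul 𝒜 ℳ] [DirectSum.Decomposition ℳ] :
    (traceIdeal A M = ⊤ ↔
      ∃ N P : Submodule A M, IsCompl N P ∧ N ≠ ⊥ ∧ Module.Free A N) ∧
    (∀ (p : Ideal A) [p.IsPrime], Ideal.IsHomogeneous 𝒜 p →
      (¬ traceIdeal A M ≤ p ↔
        ∃ N P : Submodule (Localization p.primeCompl) (LocalizedModule p.primeCompl M),
          IsCompl N P ∧ N ≠ ⊥ ∧ Module.Free (Localization p.primeCompl) N)) := by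
  have : Nontrivial A := (Submodule.nontrivial_iff A).mp ⟨m, ⊤, hm_ne⟩
  have : Module.FinitePresentation A M := Module.finitePresentation_of_finite A M
  refine ⟨?_, fun p _ _ => ?_⟩
  · rw [exists_isCompl_free_iff_exists_surjective]
    exact ⟨exists_surjective_of_traceIdeal_eq_top 𝒜 ℳ hm_ne hm_max,
      fun ⟨_, hf⟩ => traceIdeal_eq_top_of_surjective hf⟩
  · rw [exists_isCompl_free_iff_exists_surjective,
      exists_surjective_localizedModule_iff_not_traceIdeal_le]

/-- Remark 2.2(4): let `A` be a commutative Noetherian ℕ-graded ring with a unique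
maximal element `m` among its proper graded ideals, and `M` a finitely generated
graded `A`-module. Then (a) `tr_A(M) = A` iff `M` has a nonzero free direct summand,
and (b) a graded prime `p` does not contain `tr_A(M)` iff `M_p` has a nonzero free
`A_p`-direct summand. -/
theorem statement15 {A : Type*} [CommRing A] [IsNoetherianRing A]
    (𝒜 : ℕ → AddSubgroup A) [GradedRing 𝒜]
    (m : Ideal A) (hm_hom : Ideal.IsHomogeneous 𝒜 m) (hm_ne : m ≠ ⊤)
    (hm_max : ∀ I : Ideal A, Ideal.IsHomogeneous 𝒜 I → I ≠ ⊤ → I ≤ m)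
    {M : Type*} [AddCommGroup M] [Module A M] [Module.Finite A M]
    (ℳ : ℕ → AddSubgroup M) [SetLike.GradedSMul 𝒜 ℳ] [DirectSum.Decomposition ℳ] :
    (traceIdeal A M = ⊤ ↔
      ∃ N P : Submodule A M, IsCompl N P ∧ N ≠ ⊥ ∧ Module.Free A N) ∧
    (∀ (p : Ideal A) [p.IsPrime], Ideal.IsHomogeneous 𝒜 p →
      (¬ traceIdeal A M ≤ p ↔
        ∃ N P : Submodule (Localization p.primeCompl) (LocalizedModule p.primeCompl M),
          IsCompl N P ∧ N ≠ ⊥ ∧ Module.Free (Localization p.primeCompl) N)) :=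
  statement15_general 𝒜 m hm_ne hm_max ℳ
end
end
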